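/- arXiv:2304.00100 — 2 statements merged into one kernel-verified Lean document; each statement's English description precedes it below -/
import Mathlib

section
/- Let ψ : ℝⁿ → ℝᴺ be Lipschitz continuous with Lipschitz constant μ_g ≥ 0. Let C ∈ ℝ^{n×N}, K_x ∈ ℝ^{N×N}, K_u ∈ ℝ^{N×m} be matrices, and let x_{t−1}, x_t, x_{t+1} ∈ ℝⁿ and u_{t−1}, u_t ∈ ℝᵐ be vectors. Assume: (i) the Koopman relation is exact on the previous sample, ψ(x_t) = K_x ψ(x_{t−1}) + K_u u_{t−1}; (ii) the reconstruction error satisfies ‖x_t − C ψ(x_t)‖ ≤ l for some l ≥ 0; (iii) ‖x_{t+1} − x_t‖ ≤ μ_x and ‖x_t − x_{t−1}‖ ≤ μ_x; and (iv) ‖u_t − u_{t−1}‖ ≤ μ_u. Then the one-step prediction error of the Koopman model satisfies ‖C K_x ψ(x_t) + C K_u u_t − x_{t+1}‖ ≤ (‖C K_x‖ μ_g + 1) μ_x + ‖C K_u‖ μ_u + l, where ‖·‖ on matrices denotes the operator norm induced by the Euclidean norm. -/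
open scoped NNReal

/-! Using the exact Koopman relation on the previous sample, the prediction error splits as
`C K_x (ψ x_t - ψ x_{t-1}) + C K_u (u_t - u_{t-1}) + (C ψ x_t - x_t) + (x_t - x_{t+1})`:
a difference of consecutive observables, a difference of consecutive inputs, the reconstruction
error and a state increment. The triangle inequality, the operator-norm bound and the Lipschitz
bound on `ψ` then give the four terms of the estimate. -/

theorem ContinuousLinearMap.koopman_prediction_error_eq {R E F U : Type*} [Semiring R]
    [AddCommGroup E] [Module R E] [TopologicalSpace E]
    [AddCommGroup F] [Module R F] [TopologicalSpace F]
    [AddCommGroup U] [Module R U] [TopologicalSpace U]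
    (C : F →L[R] E) (Kx : F →L[R] F) (Ku : U →L[R] F)
    {z zprev : F} {x xnext : E} {u uprev : U} (hz : z = Kx zprev + Ku uprev) :
    C (Kx z) + C (Ku u) - xnext =
      (C.comp Kx) (z - zprev) + (C.comp Ku) (u - uprev) + (C z - x) + (x - xnext) := by
  simp only [comp_apply, map_sub]
  rw [hz, map_add C]
  abel

theorem koopman_one_step_error_bound_general {n m N : ℕ} (μg : ℝ≥0) (μx μu l : ℝ)
    (ψ : EuclideanSpace ℝ (Fin n) → EuclideanSpace ℝ (Fin N))
    (hψ : LipschitzWith μg ψ)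
    (C : EuclideanSpace ℝ (Fin N) →L[ℝ] EuclideanSpace ℝ (Fin n))
    (Kx : EuclideanSpace ℝ (Fin N) →L[ℝ] EuclideanSpace ℝ (Fin N))
    (Ku : EuclideanSpace ℝ (Fin m) →L[ℝ] EuclideanSpace ℝ (Fin N))
    (xprev xt xnext : EuclideanSpace ℝ (Fin n))
    (uprev ut : EuclideanSpace ℝ (Fin m))
    (hKoop : ψ xt = Kx (ψ xprev) + Ku uprev)
    (hrec : ‖xt - C (ψ xt)‖ ≤ l)
    (hx₁ : ‖xnext - xt‖ ≤ μx) (hx₂ : ‖xt - xprev‖ ≤ μx)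
    (hu : ‖ut - uprev‖ ≤ μu) :
    ‖C (Kx (ψ xt)) + C (Ku ut) - xnext‖ ≤
      (‖C.comp Kx‖ * (μg : ℝ) + 1) * μx + ‖C.comp Ku‖ * μu + l := by
  rw [C.koopman_prediction_error_eq Kx Ku (x := xt) (u := ut) hKoop]
  have hobs := (C.comp Kx).le_opNorm_of_le (hψ.norm_sub_le_of_le hx₂)
  have hinput := (C.comp Ku).le_opNorm_of_le hu
  rw [← norm_sub_rev] at hrec hx₁
  calc _ ≤ ‖(C.comp Kx) (ψ xt - ψ xprev)‖ + ‖(C.comp Ku) (ut - uprev)‖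
          + ‖C (ψ xt) - xt‖ + ‖xt - xnext‖ := norm_add₄_le
    _ ≤ ‖C.comp Kx‖ * ((μg : ℝ) * μx) + ‖C.comp Ku‖ * μu + l + μx := by gcongr
    _ = (‖C.comp Kx‖ * (μg : ℝ) + 1) * μx + ‖C.comp Ku‖ * μu + l := by ring

/-- quantitative content of Lemma 2 of the paper: one-step prediction
error bound for the deep Koopman representation.  The matrices `C, K_x, K_u` are
formalized as continuous linear maps between Euclidean spaces, so that `‖·‖` is the
operator norm induced by the Euclidean norm. -/
theorem koopman_one_step_error_bound {n m N : ℕ} (μg : ℝ≥0) (μx μu l : ℝ)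
    (ψ : EuclideanSpace ℝ (Fin n) → EuclideanSpace ℝ (Fin N))
    (hψ : LipschitzWith μg ψ)
    (C : EuclideanSpace ℝ (Fin N) →L[ℝ] EuclideanSpace ℝ (Fin n))
    (Kx : EuclideanSpace ℝ (Fin N) →L[ℝ] EuclideanSpace ℝ (Fin N))
    (Ku : EuclideanSpace ℝ (Fin m) →L[ℝ] EuclideanSpace ℝ (Fin N))
    (xprev xt xnext : EuclideanSpace ℝ (Fin n))
    (uprev ut : EuclideanSpace ℝ (Fin m))
    (hl : 0 ≤ l)
    (hKoop : ψ xt = Kx (ψ xprev) + Ku uprev)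
    (hrec : ‖xt - C (ψ xt)‖ ≤ l)
    (hx₁ : ‖xnext - xt‖ ≤ μx) (hx₂ : ‖xt - xprev‖ ≤ μx)
    (hu : ‖ut - uprev‖ ≤ μu) :
    ‖C (Kx (ψ xt)) + C (Ku ut) - xnext‖ ≤
      (‖C.comp Kx‖ * (μg : ℝ) + 1) * μx + ‖C.comp Ku‖ * μu + l :=
  koopman_one_step_error_bound_general μg μx μu l ψ hψ C Kx Ku xprev xt xnext uprev ut hKoop hrec
    hx₁ hx₂ hu
end

section
/- Let Z₁ ∈ ℝ^{p×τ₁}, Z₂ ∈ ℝ^{p×τ₂}, Y₁ ∈ ℝ^{N×τ₁}, Y₂ ∈ ℝ^{N×τ₂} be real matrices, and assume G = Z₁ Z₁′ is invertible and that the matrix γ = (I_{τ₂} + Z₂′ G⁻¹ Z₂)⁻¹ exists (i.e., I_{τ₂} + Z₂′ G⁻¹ Z₂ is invertible) and that G + Z₂ Z₂′ is invertible. Let K₁ = Y₁ Z₁′ G⁻¹ be the least-squares solution on the first data batch. Then the recursively updated operator equals the batch least-squares solution on the combined data: K₁ + (Y₂ − K₁ Z₂) γ Z₂′ G⁻¹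 = (Y₁ Z₁′ + Y₂ Z₂′)(Z₁ Z₁′ + Z₂ Z₂′)⁻¹. (Since concatenating the columns of (Z₁, Z₂) into Z and of (Y₁, Y₂) into Y gives Z Z′ = Z₁Z₁′ + Z₂Z₂′ and Y Z′ = Y₁Z₁′ + Y₂Z₂′, the right-hand side is exactly the least-squares fit Y Z′ (Z Z′)⁻¹ on all the data.) -/
/-!
By the Woodbury identity, `(G + Z₂ Z₂′)⁻¹ = G⁻¹ - G⁻¹ Z₂ γ Z₂′ G⁻¹`, and multiplying it on the
left by `Z₂′` gives the push-through identity `Z₂′ (G + Z₂ Z₂′)⁻¹ = γ Z₂′ G⁻¹`. Splitting the batch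
solution as `Y₁ Z₁′ (G + Z₂ Z₂′)⁻¹ + Y₂ Z₂′ (G + Z₂ Z₂′)⁻¹` and applying these two identities
yields the recursive update term by term.
-/

open scoped Matrix

namespace Matrix

variable {n m α : Type*} [Fintype n] [DecidableEq n] [Fintype m] [DecidableEq m] [CommRing α]

theorem one_sub_mul_inv_one_add {M : Matrix m m α} (h : IsUnit (1 + M)) :
    1 - M * (1 + M)⁻¹ = (1 + M)⁻¹ := by
  have h_inv : (1 + M) * (1 + M)⁻¹ = 1 := mul_nonsing_inv _ ((isUnit_iff_isUnit_det _).mp h)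
  rw [Matrix.add_mul, Matrix.one_mul] at h_inv
  exact (eq_sub_of_add_eq h_inv).symm

theorem add_mul_inv_eq_sub {A : Matrix n n α} (U : Matrix n m α) (V : Matrix m n α)
    (hA : IsUnit A) (h : IsUnit (1 + V * A⁻¹ * U)) :
    (A + U * V)⁻¹ = A⁻¹ - A⁻¹ * U * (1 + V * A⁻¹ * U)⁻¹ * V * A⁻¹ := by
  simpa using add_mul_mul_inv_eq_sub A U 1 V hA isUnit_one (by simpa using h)

theorem mul_add_mul_inv {A : Matrix n n α} (U : Matrix n m α) (V : Matrix m n α)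
    (hA : IsUnit A) (h : IsUnit (1 + V * A⁻¹ * U)) :
    V * (A + U * V)⁻¹ = (1 + V * A⁻¹ * U)⁻¹ * V * A⁻¹ := by
  calc V * (A + U * V)⁻¹
      = (1 - V * A⁻¹ * U * (1 + V * A⁻¹ * U)⁻¹) * V * A⁻¹ := by
        simp only [add_mul_inv_eq_sub U V hA h, Matrix.mul_sub, Matrix.sub_mul, Matrix.one_mul,
          Matrix.mul_assoc]
    _ = (1 + V * A⁻¹ * U)⁻¹ * V * A⁻¹ := by rw [one_sub_mul_inv_one_add h]

end Matrix

theorem recursive_koopman_update_eq_batch_general {N p τ₁ τ₂ : ℕ}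
    (Z₁ : Matrix (Fin p) (Fin τ₁) ℝ) (Z₂ : Matrix (Fin p) (Fin τ₂) ℝ)
    (Y₁ : Matrix (Fin N) (Fin τ₁) ℝ) (Y₂ : Matrix (Fin N) (Fin τ₂) ℝ)
    (hG : IsUnit (Z₁ * Z₁ᵀ))
    (hγ : IsUnit ((1 : Matrix (Fin τ₂) (Fin τ₂) ℝ) + Z₂ᵀ * (Z₁ * Z₁ᵀ)⁻¹ * Z₂)) :
    Y₁ * Z₁ᵀ * (Z₁ * Z₁ᵀ)⁻¹ +
        (Y₂ - Y₁ * Z₁ᵀ * (Z₁ * Z₁ᵀ)⁻¹ * Z₂) *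
          ((1 : Matrix (Fin τ₂) (Fin τ₂) ℝ) + Z₂ᵀ * (Z₁ * Z₁ᵀ)⁻¹ * Z₂)⁻¹ * Z₂ᵀ *
          (Z₁ * Z₁ᵀ)⁻¹ =
      (Y₁ * Z₁ᵀ + Y₂ * Z₂ᵀ) * (Z₁ * Z₁ᵀ + Z₂ * Z₂ᵀ)⁻¹ := by
  rw [Matrix.add_mul, Matrix.mul_assoc Y₂, Matrix.mul_add_mul_inv Z₂ Z₂ᵀ hG hγ,
    Matrix.mul_assoc (Y₁ * Z₁ᵀ), Matrix.add_mul_inv_eq_sub Z₂ Z₂ᵀ hG hγ]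
  simp only [Matrix.mul_sub, Matrix.sub_mul, Matrix.mul_assoc]
  abel

/-- Lemma 1 of the paper, recursive least-squares update: the
recursively updated Koopman operator equals the batch least-squares solution on
the combined data. -/
theorem recursive_koopman_update_eq_batch {N p τ₁ τ₂ : ℕ}
    (Z₁ : Matrix (Fin p) (Fin τ₁) ℝ) (Z₂ : Matrix (Fin p) (Fin τ₂) ℝ)
    (Y₁ : Matrix (Fin N) (Fin τ₁) ℝ) (Y₂ : Matrix (Fin N) (Fin τ₂) ℝ)
    (hG : IsUnit (Z₁ * Z₁ᵀ))
    (hγ : IsUnit ((1 : Matrix (Fin τ₂) (Fin τ₂) ℝ) + Z₂ᵀ * (Z₁ * Z₁ᵀ)⁻¹ * Z₂))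
    (hGZ : IsUnit (Z₁ * Z₁ᵀ + Z₂ * Z₂ᵀ)) :
    Y₁ * Z₁ᵀ * (Z₁ * Z₁ᵀ)⁻¹ +
        (Y₂ - Y₁ * Z₁ᵀ * (Z₁ * Z₁ᵀ)⁻¹ * Z₂) *
          ((1 : Matrix (Fin τ₂) (Fin τ₂) ℝ) + Z₂ᵀ * (Z₁ * Z₁ᵀ)⁻¹ * Z₂)⁻¹ * Z₂ᵀ *
          (Z₁ * Z₁ᵀ)⁻¹ =
      (Y₁ * Z₁ᵀ + Y₂ * Z₂ᵀ) * (Z₁ * Z₁ᵀ + Z₂ * Z₂ᵀ)⁻¹ :=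
  recursive_koopman_update_eq_batch_general Z₁ Z₂ Y₁ Y₂ hG hγ
end
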